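/- For every integer n ≥ 1 and every j ∈ {1,…,n}, the number of arrangements of {1,…,n} that avoid all patterns 12, 23, …, (n−1)n, n1 and whose first digit σ(1) equals j is exactly Der_{n−1}. In particular these arrangements are equidistributed: every class (set of such arrangements with a fixed first digit) has the same cardinality Der_{n−1}. -/

import Mathlib

/-- The arrangement (one-line notation) of `σ` avoids all patterns
`12, 23, …, (n-1)n`: digit `i` (encoded as the value `i-1` in `Fin n`)
is never immediately followed by digit `i+1`. -/
def avoidsSucc (n : ℕ) (σ : Equiv.Perm (Fin n)) : Prop :=
  ∀ (k : ℕ) (h : k + 1 < n),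
    (σ ⟨k + 1, h⟩).val ≠ (σ ⟨k, Nat.lt_of_succ_lt h⟩).val + 1

/-- The arrangement of `σ` contains the pattern `n1`: digit `n` (value `n-1`)
is immediately followed by digit `1` (value `0`). -/
def containsN1 (n : ℕ) (σ : Equiv.Perm (Fin n)) : Prop :=
  ∃ (k : ℕ) (h : k + 1 < n),
    (σ ⟨k, Nat.lt_of_succ_lt h⟩).val = n - 1 ∧ (σ ⟨k + 1, h⟩).val = 0

/-- `dCount n` = number of arrangements of `{1,…,n}` avoiding `12, 23, …, (n-1)n`. -/
noncomputable def dCount (n : ℕ) : ℕ :=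
  Nat.card {σ : Equiv.Perm (Fin n) // avoidsSucc n σ}

/-- `DCount n` = number of arrangements of `{1,…,n}` avoiding `12, 23, …, (n-1)n, n1`. -/
noncomputable def DCount (n : ℕ) : ℕ :=
  Nat.card {σ : Equiv.Perm (Fin n) // avoidsSucc n σ ∧ ¬ containsN1 n σ}

/-!
Rotating all values by `-j` modulo `n` preserves the cyclic succession condition, so every class
has the size of the class of the first digit `1`. Written with values `0, …, m`, that class consists
of the words beginning with `0` in which no letter `a` is directly followed by `a + 1`; call their
number `a m`. In such a word over `0, …, m + 2`, the largest letter follows some `x ≤ m`. Deleting it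
leaves either a word of the same kind over `0, …, m + 1`, or a word whose only succession is `x, x + 1`;
contracting that pair to `x` gives a word of the same kind over `0, …, m`. Hence
`a (m + 2) = (m + 1) * (a m + a (m + 1))`, the recursion of the derangement numbers.
-/

open List Equiv

lemma Fin.eq_add_one_iff {n : ℕ} {a b : Fin (n + 1)} :
    b = a + 1 ↔ (b : ℕ) = a + 1 ∨ ((a : ℕ) = n ∧ (b : ℕ) = 0) := by
  rw [Fin.ext_iff, Fin.val_add_one]
  split_ifs with h
  · rw [h, Fin.val_last]
    have := b.isLt
    omega
  · have : (a : ℕ) ≠ n := fun h' => h (Fin.ext h')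
    simp [this]

lemma finite_setOf_perm {α : Type*} [DecidableEq α] (l : List α) : {w | w ~ l}.Finite :=
  l.permutations.toFinset.finite_toSet.subset fun w hw => by simpa [mem_permutations] using hw

lemma range_succ_perm (n : ℕ) : range (n + 1) ~ n :: range n := by
  rw [range_succ]; exact perm_append_singleton n (range n)

namespace Succession

section InsertAfter

variable {α : Type*} [DecidableEq α]

def insertAfter (x y : α) : List α → List α
  | [] => []
  | a :: l => if a = x then a :: y :: l else a :: insertAfter x y l

variable {x y : α} {l : List α}

lemma insertAfter_append_cons {u v : List α} (hx : x ∉ u) :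
    insertAfter x y (u ++ x :: v) = u ++ x :: y :: v := by
  induction u with
  | nil => simp [insertAfter]
  | cons a u ih =>
    simp only [mem_cons, not_or] at hx
    simp [insertAfter, Ne.symm hx.1, ih hx.2]

lemma head?_insertAfter : (insertAfter x y l).head? = l.head? := by
  cases l with
  | nil => rfl
  | cons a l => simp only [insertAfter]; split_ifs <;> rfl

lemma perm_insertAfter (hx : x ∈ l) : insertAfter x y l ~ y :: l := by
  induction l with
  | nil => simp at hx
  | cons a l ih =>
    simp only [insertAfter]
    split_ifs with h
    · exact Perm.swap y a l
    · exact ((ih (by simpa [Ne.symm h] using hx)).cons a).trans (Perm.swap y a l)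

lemma erase_insertAfter (hx : x ∈ l) (hy : y ∉ l) : (insertAfter x y l).erase y = l := by
  induction l with
  | nil => simp at hx
  | cons a l ih =>
    simp only [mem_cons, not_or] at hx hy
    simp only [insertAfter]
    split_ifs with h
    · simp [Ne.symm hy.1]
    · simp [Ne.symm hy.1, ih (hx.resolve_left (Ne.symm h)) hy.2]

lemma insertAfter_left_injective {x' : α} (hx : x ∈ l) (hx' : x' ∈ l) (hy : y ∉ l)
    (h : insertAfter x y l = insertAfter x' y l) : x = x' := by
  induction l with
  | nil => simp at hx
  | cons a l ih =>
    simp only [mem_cons, not_or] at hx hx' hy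
    simp only [insertAfter] at h
    split_ifs at h with h₁ h₂ h₂
    · exact h₁.symm.trans h₂
    · have := congrArg head? (cons.inj h).2
      rw [head?_insertAfter] at this
      exact absurd (mem_of_mem_head? this.symm) hy.2
    · have := congrArg head? (cons.inj h).2
      rw [head?_insertAfter] at this
      exact absurd (mem_of_mem_head? this) hy.2
    · exact ih (hx.resolve_left (Ne.symm h₁)) (hx'.resolve_left (Ne.symm h₂)) hy.2 (cons.inj h).2

lemma exists_eq_insertAfter {w : List α} (hw : w.Nodup) (hy : y ∈ w) (hhead : w.head? ≠ some y) :
    ∃ x l, x ∈ l ∧ w = insertAfter x y l := by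
  induction w with
  | nil => simp at hy
  | cons a w ih =>
    rw [nodup_cons] at hw
    obtain rfl | hyw := mem_cons.1 hy
    · simp at hhead
    by_cases hw' : w.head? = some y
    · obtain ⟨w, rfl⟩ : ∃ t, w = y :: t := by
        cases w <;> simp_all
      exact ⟨a, a :: w, mem_cons_self, by simp [insertAfter]⟩
    · obtain ⟨x, l, hx, rfl⟩ := ih hw.2 hyw hw'
      have hax : a ≠ x := fun h => hw.1 (h ▸ (perm_insertAfter hx).mem_iff.2 (mem_cons_of_mem _ hx))
      exact ⟨x, a :: l, mem_cons_of_mem _ hx, by simp [insertAfter, hax]⟩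

lemma isChain_insertAfter {S : α → α → Prop} (hl : l.Nodup) (hx : x ∈ l) :
    IsChain S (insertAfter x y l) ↔
      S x y ∧ IsChain (fun a b => if a = x then S y b else S a b) l := by
  induction l with
  | nil => simp at hx
  | cons a l ih =>
    rw [nodup_cons] at hl
    by_cases hax : a = x
    · subst hax
      have : IsChain (fun b c => if b = a then S y c else S b c) l ↔ IsChain S l :=
        IsChain.iff_of_mem_imp fun b c hb _ => by rw [if_neg (ne_of_mem_of_not_mem hb hl.1)]
      simp [insertAfter, isChain_cons, this]
    · have hxl : x ∈ l := (mem_cons.1 hx).resolve_left (Ne.symm hax)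
      simp only [insertAfter, if_neg hax, isChain_cons, head?_insertAfter, ih hl.2 hxl]
      tauto

end InsertAfter

def NotSucc (a b : ℕ) : Prop := b ≠ a + 1

def NotSuccExcept (x a b : ℕ) : Prop := a = x ∨ b ≠ a + 1

def succFreeWords (n : ℕ) : Set (List ℕ) :=
  {l | l ~ range n ∧ l.head? = some 0 ∧ l.IsChain NotSucc}

def nearSuccFreeWords (n x : ℕ) : Set (List ℕ) :=
  {l | l ~ range n ∧ l.head? = some 0 ∧ l.IsChain (NotSuccExcept x)}

instance (n : ℕ) : Finite (succFreeWords n) :=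
  (finite_setOf_perm (range n)).subset (fun _ h => h.1) |>.to_subtype

instance (n x : ℕ) : Finite (nearSuccFreeWords n x) :=
  (finite_setOf_perm (range n)).subset (fun _ h => h.1) |>.to_subtype

lemma insertAfter_mem_succFreeWords_iff {m x : ℕ} {l : List ℕ} (hx : x ∈ l) :
    insertAfter x (m + 2) l ∈ succFreeWords (m + 3) ↔
      x ≤ m ∧ l ∈ nearSuccFreeWords (m + 2) x := by
  have hperm : insertAfter x (m + 2) l ~ range (m + 3) ↔ l ~ range (m + 2) := by
    rw [(perm_insertAfter hx).congr_left, (range_succ_perm (m + 2)).congr_right, perm_cons]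
  simp only [succFreeWords, nearSuccFreeWords, Set.mem_ofPred_eq, hperm, head?_insertAfter]
  by_cases hl : l ~ range (m + 2)
  swap
  · simp [hl]
  have hlt : ∀ b ∈ l, b < m + 2 := fun b hb => by simpa using hl.subset hb
  have hS : IsChain (fun a b => if a = x then NotSucc (m + 2) b else NotSucc a b) l ↔
      IsChain (NotSuccExcept x) l :=
    IsChain.iff_of_mem_imp fun a b _ hb => by
      have := hlt b hb
      unfold NotSucc NotSuccExcept; split_ifs <;> omega
  rw [isChain_insertAfter (hl.nodup_iff.2 nodup_range) hx, hS]
  have := hlt x hx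
  simp only [NotSucc, hl, true_and]
  constructor
  · rintro ⟨h0, hne, hc⟩; exact ⟨by omega, h0, hc⟩
  · rintro ⟨hm, h0, hc⟩; exact ⟨h0, by omega, hc⟩

def succAbove (p v : ℕ) : ℕ := if v < p then v else v + 1

def predAbove (p v : ℕ) : ℕ := if p < v then v - 1 else v

lemma succAbove_injective (p : ℕ) : Function.Injective (succAbove p) := by
  intro a b h; unfold succAbove at h; split_ifs at h <;> omega

lemma predAbove_succAbove (x v : ℕ) : predAbove x (succAbove (x + 1) v) = v := by
  unfold predAbove succAbove; split_ifs <;> omega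

lemma succAbove_predAbove {x v : ℕ} (hv : v ≠ x + 1) : succAbove (x + 1) (predAbove x v) = v := by
  unfold predAbove succAbove; split_ifs <;> omega

lemma succAbove_ne (x v : ℕ) : succAbove (x + 1) v ≠ x + 1 := by
  unfold succAbove; split_ifs <;> omega

lemma succAbove_eq_zero_iff {x v : ℕ} : succAbove (x + 1) v = 0 ↔ v = 0 := by
  unfold succAbove; split_ifs
  · rfl
  · simp only [false_iff]; omega

lemma range_perm_cons_map_succAbove {m x : ℕ} (hx : x ≤ m) :
    range (m + 2) ~ (x + 1) :: (range (m + 1)).map (succAbove (x + 1)) := by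
  refine (perm_ext_iff_of_nodup nodup_range ?_).2 fun v => ?_
  · exact nodup_cons.2 ⟨by simp [succAbove_ne], nodup_range.map (succAbove_injective _)⟩
  · simp only [mem_range, mem_cons, mem_map]
    constructor
    · intro hv
      by_cases h : v = x + 1
      · exact .inl h
      · exact .inr ⟨predAbove x v, by unfold predAbove; split_ifs <;> omega,
          succAbove_predAbove h⟩
    · rintro (rfl | ⟨u, hu, rfl⟩)
      · omega
      · unfold succAbove; split_ifs <;> omega

/-- Undoes the contraction of a succession `x, x + 1` into the single letter `x`. -/
def expand (x : ℕ) (l : List ℕ) : List ℕ :=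
  insertAfter x (x + 1) (l.map (succAbove (x + 1)))

section Expand

variable {x : ℕ} {l : List ℕ}

lemma mem_map_succAbove (hx : x ∈ l) : x ∈ l.map (succAbove (x + 1)) :=
  mem_map.2 ⟨x, hx, by simp [succAbove]⟩

lemma head?_expand : (expand x l).head? = (l.head?).map (succAbove (x + 1)) := by
  rw [expand, head?_insertAfter, head?_map]

lemma erase_expand (hx : x ∈ l) : (expand x l).erase (x + 1) = l.map (succAbove (x + 1)) :=
  erase_insertAfter (mem_map_succAbove hx) (by simp [succAbove_ne])

lemma isChain_expand_iff (hl : l.Nodup) (hx : x ∈ l) :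
    IsChain (NotSuccExcept x) (expand x l) ↔ IsChain NotSucc l := by
  rw [expand, isChain_insertAfter (hl.map (succAbove_injective _)) (mem_map_succAbove hx),
    isChain_map]
  refine ⟨fun h => h.2.imp fun a b h => ?_, fun h => ⟨.inl rfl, h.imp fun a b h => ?_⟩⟩
  all_goals unfold NotSucc NotSuccExcept succAbove at *; split_ifs at * <;> omega

lemma not_isChain_expand (hl : l.Nodup) (hx : x ∈ l) : ¬ IsChain NotSucc (expand x l) := by
  rw [expand, isChain_insertAfter (hl.map (succAbove_injective _)) (mem_map_succAbove hx)]
  simp [NotSucc]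

lemma expand_mem_nearSuccFreeWords_iff {m : ℕ} (hxm : x ≤ m) (hx : x ∈ l) :
    expand x l ∈ nearSuccFreeWords (m + 2) x ↔ l ∈ succFreeWords (m + 1) := by
  have hperm : expand x l ~ range (m + 2) ↔ l ~ range (m + 1) := by
    rw [expand, (perm_insertAfter (mem_map_succAbove hx)).congr_left,
      (range_perm_cons_map_succAbove hxm).congr_right, perm_cons]
    refine ⟨fun h => ?_, Perm.map _⟩
    simpa [map_map, Function.comp_def, predAbove_succAbove] using h.map (predAbove x)
  have hhead : (expand x l).head? = some 0 ↔ l.head? = some 0 := by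
    rw [head?_expand]
    cases l.head? <;> simp [succAbove_eq_zero_iff]
  simp only [succFreeWords, nearSuccFreeWords, Set.mem_ofPred_eq, hperm, hhead]
  by_cases hl : l ~ range (m + 1)
  · simp only [hl, true_and, isChain_expand_iff (hl.nodup_iff.2 nodup_range) hx]
  · simp [hl]

lemma exists_expand_eq (hl : l.Nodup) (hc : IsChain (NotSuccExcept x) l)
    (hnc : ¬ IsChain NotSucc l) : ∃ l₀, x ∈ l₀ ∧ expand x l₀ = l := by
  obtain ⟨a, b, l₁, l₂, rfl, hab⟩ : ∃ a b l₁ l₂, l = l₁ ++ a :: b :: l₂ ∧ b = a + 1 := by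
    simpa [isChain_iff_forall_rel_of_append_cons_cons, NotSucc] using hnc
  obtain rfl : x = a := by
    have := (isChain_append_cons_cons.1 hc).2.1
    unfold NotSuccExcept at this; omega
  subst hab
  simp only [nodup_append, nodup_cons, mem_cons, not_or] at hl
  refine ⟨(l₁ ++ x :: l₂).map (predAbove x), mem_map.2 ⟨x, by simp, by simp [predAbove]⟩, ?_⟩
  have hid : ∀ v ∈ l₁ ++ x :: l₂, (succAbove (x + 1) ∘ predAbove x) v = id v := by
    intro v hv
    refine succAbove_predAbove fun h => ?_
    subst h
    simp only [mem_append, mem_cons] at hv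
    grind
  rw [expand, map_map, map_congr_left (g := id) hid, map_id,
    insertAfter_append_cons fun h => hl.2.2 x h x (.inl rfl) rfl]

end Expand

lemma card_nearSuccFreeWords {m x : ℕ} (hx : x ≤ m) :
    Nat.card (nearSuccFreeWords (m + 2) x) =
      Nat.card (succFreeWords (m + 2)) + Nat.card (succFreeWords (m + 1)) := by
  have hmem {l : List ℕ} (hl : l ∈ succFreeWords (m + 1)) : x ∈ l :=
    hl.1.mem_iff.2 (mem_range.2 (by omega))
  rw [← Nat.card_sum]
  refine (Nat.card_eq_of_bijective
    (Sum.elim (fun l => ⟨l, l.2.1, l.2.2.1, l.2.2.2.imp fun _ _ => .inr⟩)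
      (fun l => ⟨expand x l, (expand_mem_nearSuccFreeWords_iff hx (hmem l.2)).2 l.2⟩))
    ⟨?_, ?_⟩).symm
  · refine Function.Injective.sumElim (fun l l' h => Subtype.ext (Subtype.mk.inj h))
      (fun l l' h => Subtype.ext ?_) fun l l' h => ?_
    · have := congrArg (fun w => w.1.erase (x + 1)) h
      simp only [erase_expand (hmem l.2), erase_expand (hmem l'.2)] at this
      exact map_injective_iff.2 (succAbove_injective _) this
    · have hl' := l'.2.1.nodup_iff.2 nodup_range
      exact not_isChain_expand hl' (hmem l'.2) (Subtype.mk.inj h ▸ l.2.2.2)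
  · rintro ⟨l, hl⟩
    by_cases hc : IsChain NotSucc l
    · exact ⟨.inl ⟨l, hl.1, hl.2.1, hc⟩, rfl⟩
    · obtain ⟨l₀, hx₀, rfl⟩ := exists_expand_eq (hl.1.nodup_iff.2 nodup_range) hl.2.2 hc
      exact ⟨.inr ⟨l₀, (expand_mem_nearSuccFreeWords_iff hx hx₀).1 hl⟩, rfl⟩

lemma card_succFreeWords_add_three_eq_sum (m : ℕ) :
    Nat.card (succFreeWords (m + 3)) =
      ∑ x : Fin (m + 1), Nat.card (nearSuccFreeWords (m + 2) x) := by
  have hmem {x : ℕ} {l : List ℕ} (hx : x ≤ m) (hl : l ∈ nearSuccFreeWords (m + 2) x) : x ∈ l :=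
    hl.1.mem_iff.2 (mem_range.2 (by omega))
  have hN {x : ℕ} {l : List ℕ} (hl : l ∈ nearSuccFreeWords (m + 2) x) : m + 2 ∉ l := by
    simp [hl.1.mem_iff]
  rw [← Nat.card_sigma]
  refine (Nat.card_eq_of_bijective (fun p => ⟨insertAfter p.1 (m + 2) p.2,
    (insertAfter_mem_succFreeWords_iff (hmem p.1.is_le p.2.2)).2 ⟨p.1.is_le, p.2.2⟩⟩)
    ⟨?_, ?_⟩).symm
  · rintro ⟨x, l, hl⟩ ⟨x', l', hl'⟩ h
    have h := Subtype.mk.inj h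
    have hx := hmem x.is_le hl
    have hx' := hmem x'.is_le hl'
    obtain rfl : l = l' := by
      simpa only [erase_insertAfter hx (hN hl), erase_insertAfter hx' (hN hl')] using
        congrArg (·.erase (m + 2)) h
    exact Sigma.subtype_ext (Fin.ext (insertAfter_left_injective hx hx' (hN hl) h)) rfl
  · rintro ⟨w, hw⟩
    obtain ⟨x, l, hx, rfl⟩ := exists_eq_insertAfter (y := m + 2) (hw.1.nodup_iff.2 nodup_range)
      (hw.1.mem_iff.2 (by simp)) (by simp [hw.2.1])
    obtain ⟨hxm, hl⟩ := (insertAfter_mem_succFreeWords_iff hx).1 hw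
    exact ⟨⟨⟨x, by omega⟩, l, hl⟩, rfl⟩

lemma card_succFreeWords_add_three (m : ℕ) :
    Nat.card (succFreeWords (m + 3)) =
      (m + 1) * (Nat.card (succFreeWords (m + 1)) + Nat.card (succFreeWords (m + 2))) := by
  rw [card_succFreeWords_add_three_eq_sum,
    Finset.sum_congr rfl fun x _ => card_nearSuccFreeWords x.is_le, Finset.sum_const,
    Finset.card_univ, Fintype.card_fin, smul_eq_mul, add_comm (Nat.card _)]

lemma succFreeWords_one : succFreeWords 1 = {[0]} := by
  ext l
  simp only [succFreeWords, Set.mem_ofPred_eq, Set.mem_singleton_iff, range_one, perm_singleton]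
  constructor
  · exact fun h => h.1
  · rintro rfl; simp

lemma succFreeWords_two : succFreeWords 2 = ∅ := by
  refine Set.eq_empty_of_forall_notMem fun l ⟨hperm, hhead, hc⟩ => ?_
  obtain ⟨t, rfl⟩ : ∃ t, l = 0 :: t := by
    cases l <;> simp_all
  have : t = [1] := perm_singleton.1 ((perm_cons 0).1 (by simpa [range_succ] using hperm))
  subst this
  simp [NotSucc] at hc

lemma card_succFreeWords (m : ℕ) : Nat.card (succFreeWords (m + 1)) = numDerangements m := by
  induction m using Nat.twoStepInduction with
  | zero => simp [succFreeWords_one]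
  | one => simp [succFreeWords_two]
  | more m ih ih' => rw [card_succFreeWords_add_three, ih, ih', numDerangements_add_two]

lemma ofFn_val_perm_range {n : ℕ} (σ : Perm (Fin n)) : ofFn (fun i => (σ i : ℕ)) ~ range n := by
  refine (perm_ext_iff_of_nodup (nodup_ofFn.2 (Fin.val_injective.comp σ.injective))
    nodup_range).2 fun v => ?_
  simp only [mem_ofFn, mem_range]
  exact ⟨by rintro ⟨i, rfl⟩; exact (σ i).isLt, fun hv => ⟨σ.symm ⟨v, hv⟩, by simp⟩⟩

lemma exists_perm_ofFn_eq {n : ℕ} {l : List ℕ} (hl : l ~ range n) :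
    ∃ σ : Perm (Fin n), ofFn (fun i => (σ i : ℕ)) = l := by
  have hlen : l.length = n := by simpa using hl.length_eq
  have hlt (i : Fin n) : l[i.1] < n := mem_range.1 (hl.subset (getElem_mem _))
  have hinj : Function.Injective fun i : Fin n => (⟨l[i.1], hlt i⟩ : Fin n) := fun i j h =>
    Fin.ext ((hl.nodup_iff.2 nodup_range).getElem_inj_iff.1 (Fin.mk.inj h))
  exact ⟨.ofBijective _ (Finite.injective_iff_bijective.1 hinj),
    ext_getElem (by simp [hlen]) fun i _ _ => by simp⟩

lemma card_perm_ofFn_mem {n : ℕ} (S : Set (List ℕ)) (hS : ∀ l ∈ S, l ~ range n) :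
    Nat.card {σ : Perm (Fin n) // ofFn (fun i => (σ i : ℕ)) ∈ S} = Nat.card S := by
  refine Nat.card_eq_of_bijective (fun σ => ⟨_, σ.2⟩) ⟨fun σ τ h => ?_, fun l => ?_⟩
  · refine Subtype.ext (Equiv.ext fun i => Fin.ext ?_)
    exact congrFun (ofFn_injective (Subtype.mk.inj h)) i
  · obtain ⟨σ, hσ⟩ := exists_perm_ofFn_eq (hS l.1 l.2)
    exact ⟨⟨σ, hσ ▸ l.2⟩, Subtype.ext hσ⟩

lemma ofFn_mem_succFreeWords_iff {m : ℕ} (σ : Perm (Fin (m + 1))) :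
    ofFn (fun i => (σ i : ℕ)) ∈ succFreeWords (m + 1) ↔ avoidsSucc (m + 1) σ ∧ σ 0 = 0 := by
  have hhead : (ofFn fun i => (σ i : ℕ)).head? = some (σ 0 : ℕ) := by rw [ofFn_succ]; rfl
  simp only [succFreeWords, Set.mem_ofPred_eq, ofFn_val_perm_range, hhead, isChain_ofFn,
    Fin.ext_iff, Fin.val_zero, Option.some.injEq, true_and]
  exact and_comm

def IsCyclicSuccFree {n : ℕ} (σ : Perm (Fin (n + 1))) : Prop :=
  ∀ (k : ℕ) (h : k + 1 < n + 1), σ ⟨k + 1, h⟩ ≠ σ ⟨k, Nat.lt_of_succ_lt h⟩ + 1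

lemma avoidsSucc_and_not_containsN1_iff {m : ℕ} (σ : Perm (Fin (m + 1))) :
    avoidsSucc (m + 1) σ ∧ ¬ containsN1 (m + 1) σ ↔ IsCyclicSuccFree σ := by
  simp only [avoidsSucc, containsN1, IsCyclicSuccFree, ne_eq, Fin.eq_add_one_iff, not_or,
    not_exists, not_and, Nat.add_sub_cancel, forall_and]

lemma isCyclicSuccFree_subRight_mul {m : ℕ} (j : Fin (m + 1)) (σ : Perm (Fin (m + 1))) :
    IsCyclicSuccFree (Equiv.subRight j * σ) ↔ IsCyclicSuccFree σ := by
  simp [IsCyclicSuccFree, sub_add_eq_add_sub]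

lemma card_isCyclicSuccFree_map_zero_eq {m : ℕ} (j : Fin (m + 1)) :
    Nat.card {σ : Perm (Fin (m + 1)) // IsCyclicSuccFree σ ∧ σ 0 = j} =
      Nat.card {σ : Perm (Fin (m + 1)) // IsCyclicSuccFree σ ∧ σ 0 = 0} :=
  Nat.card_congr <| (Equiv.mulLeft (Equiv.subRight j)).subtypeEquiv fun σ => by
    simp [isCyclicSuccFree_subRight_mul, sub_eq_zero]

lemma not_containsN1_of_map_zero {m : ℕ} {σ : Perm (Fin (m + 1))} (h : σ 0 = 0) :
    ¬ containsN1 (m + 1) σ := by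
  rintro ⟨k, hk, -, hk0⟩
  have := σ.injective (Fin.ext (hk0.trans (congrArg Fin.val h).symm))
  simp [Fin.ext_iff] at this

lemma card_isCyclicSuccFree_map_zero (m : ℕ) :
    Nat.card {σ : Perm (Fin (m + 1)) // IsCyclicSuccFree σ ∧ σ 0 = 0} =
      Nat.card (succFreeWords (m + 1)) := by
  rw [← card_perm_ofFn_mem _ fun _ hl => hl.1]
  refine Nat.card_congr (Equiv.subtypeEquivRight fun σ => ?_)
  rw [ofFn_mem_succFreeWords_iff, ← avoidsSucc_and_not_containsN1_iff]
  exact ⟨fun ⟨⟨h, _⟩, h0⟩ => ⟨h, h0⟩, fun ⟨h, h0⟩ => ⟨⟨h, not_containsN1_of_map_zero h0⟩, h0⟩⟩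

end Succession

open Succession in
theorem stmt_13 (n : ℕ) (hn : 1 ≤ n) (j : Fin n) :
    Nat.card {σ : Equiv.Perm (Fin n) //
        avoidsSucc n σ ∧ ¬ containsN1 n σ ∧ σ ⟨0, hn⟩ = j} =
      numDerangements (n - 1) := by
  obtain ⟨m, rfl⟩ : ∃ m, n = m + 1 := ⟨n - 1, by omega⟩
  calc _ = Nat.card {σ : Perm (Fin (m + 1)) // IsCyclicSuccFree σ ∧ σ 0 = j} :=
        Nat.card_congr <| Equiv.subtypeEquivRight fun σ => by
          rw [← and_assoc, avoidsSucc_and_not_containsN1_iff]; rfl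
    _ = Nat.card {σ : Perm (Fin (m + 1)) // IsCyclicSuccFree σ ∧ σ 0 = 0} :=
        card_isCyclicSuccFree_map_zero_eq j
    _ = Nat.card (succFreeWords (m + 1)) := card_isCyclicSuccFree_map_zero m
    _ = numDerangements (m + 1 - 1) := card_succFreeWords m
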